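/- arXiv:2002.01112 — 3 statements merged into one kernel-verified Lean document; each statement's English description precedes it below -/
import Mathlib

section
/- For 0 < t < 1 and complex s with Re s > 0 avoiding the points 2n+2 (n ≥ 0), the identity (2/π) Σ_{n=0}^∞ (Γ(n+3/2)/(n+1)!) t^{2n+2}/(s−2n−2) = −2/(√π s) + (2/(√π s)) F(−s/2, 1/2; 1−s/2; t²) holds, where F is the Gauss hypergeometric function. -/
/-- Pochhammer symbol `(a)_n` for complex `a`. -/
noncomputable def cpoch (a : ℂ) (n : ℕ) : ℂ := ∏ i ∈ Finset.range n, (a + i)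

/-- Gauss hypergeometric function (series form, complex parameters and argument). -/
noncomputable def hypC (a b c z : ℂ) : ℂ :=
  ∑' n : ℕ, cpoch a n * cpoch b n / (cpoch c n * (n.factorial : ℂ)) * z ^ n

lemma cpoch_succ (a : ℂ) (n : ℕ) : cpoch a (n + 1) = cpoch a n * (a + n) :=
  Finset.prod_range_succ _ _

lemma cpoch_shift (a : ℂ) (n : ℕ) : cpoch a (n + 1) = a * cpoch (a + 1) n := by
  unfold cpoch
  rw [Finset.prod_range_succ']
  simp only [Nat.cast_zero, add_zero]
  rw [mul_comm]
  congr 1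
  apply Finset.prod_congr rfl
  intro i _
  push_cast
  ring

lemma gamma_prod (m : ℕ) :
    Real.Gamma (m + 3 / 2) =
      Real.sqrt Real.pi * ∏ i ∈ Finset.range (m + 1), ((i : ℝ) + 1 / 2) := by
  induction m with
  | zero =>
    rw [show ((0 : ℕ) : ℝ) + 3 / 2 = 1 / 2 + 1 by norm_num,
      Real.Gamma_add_one (by norm_num), Real.Gamma_one_half_eq]
    simp
    ring
  | succ m ih =>
    have h : ((m + 1 : ℕ) : ℝ) + 3 / 2 = ((m : ℝ) + 3 / 2) + 1 := by push_cast; ring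
    rw [h, Real.Gamma_add_one (by positivity), Finset.prod_range_succ, ih]
    push_cast
    ring

lemma gamma_le (m : ℕ) :
    Real.Gamma (m + 3 / 2) ≤ Real.sqrt Real.pi * ((m + 1).factorial : ℝ) := by
  rw [gamma_prod]
  have hfac : (((m + 1).factorial : ℕ) : ℝ) = ∏ i ∈ Finset.range (m + 1), ((i : ℝ) + 1) := by
    rw [← Finset.prod_range_add_one_eq_factorial]
    push_cast
    rfl
  rw [hfac]
  apply mul_le_mul_of_nonneg_left _ (Real.sqrt_nonneg _)
  apply Finset.prod_le_prod
  · intro i _; positivity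
  · intro i _; linarith

lemma summable_a (t : ℝ) (ht0 : 0 < t) (ht1 : t < 1) (s : ℂ) :
    Summable (fun n : ℕ =>
      ((Real.Gamma (n + 3 / 2) / ((n + 1).factorial : ℝ) * t ^ (2 * n + 2) : ℝ) : ℂ) /
        (s - 2 * n - 2)) := by
  have ht2 : t ^ 2 < 1 := by nlinarith
  have ht2' : (0 : ℝ) ≤ t ^ 2 := by positivity
  apply Summable.of_norm_bounded_eventually_nat
    ((summable_geometric_of_lt_one ht2' ht2).mul_left (Real.sqrt Real.pi * t ^ 2))
  filter_upwards [Filter.eventually_ge_atTop ⌈‖s‖⌉₊] with n hn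
  have hsn : ‖s‖ ≤ (n : ℝ) := le_trans (Nat.le_ceil _) (by exact_mod_cast hn)
  have hnorm : (1 : ℝ) ≤ ‖s - 2 * n - 2‖ := by
    have h1 : ‖(2 * (n : ℂ) + 2)‖ - ‖s‖ ≤ ‖s - 2 * n - 2‖ :=
      calc ‖(2 * (n : ℂ) + 2)‖ - ‖s‖ ≤ ‖2 * (n : ℂ) + 2 - s‖ := norm_sub_norm_le _ _
        _ = ‖s - 2 * n - 2‖ := by rw [← norm_neg]; congr 1; ring
    have h2 : ‖(2 * (n : ℂ) + 2)‖ = 2 * (n : ℝ) + 2 := by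
      have h3 : (2 * (n : ℂ) + 2) = ((2 * (n : ℝ) + 2 : ℝ) : ℂ) := by push_cast; ring
      rw [h3, Complex.norm_real, Real.norm_of_nonneg (by positivity)]
    nlinarith [norm_nonneg s]
  have hgpos : 0 < Real.Gamma ((n : ℝ) + 3 / 2) :=
    Real.Gamma_pos_of_pos (by positivity)
  have hr0 : (0 : ℝ) ≤ Real.Gamma (n + 3 / 2) / ((n + 1).factorial : ℝ) * t ^ (2 * n + 2) := by
    positivity
  rw [norm_div, Complex.norm_real, Real.norm_of_nonneg hr0]
  have hf : (0 : ℝ) < ((n + 1).factorial : ℝ) := by positivity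
  have hle1 : Real.Gamma (n + 3 / 2) / ((n + 1).factorial : ℝ) * t ^ (2 * n + 2)
      ≤ Real.sqrt Real.pi * t ^ (2 * n + 2) := by
    apply mul_le_mul_of_nonneg_right _ (by positivity : (0 : ℝ) ≤ t ^ (2 * n + 2))
    rw [div_le_iff₀ hf]
    exact gamma_le n
  calc Real.Gamma (n + 3 / 2) / ((n + 1).factorial : ℝ) * t ^ (2 * n + 2) / ‖s - 2 * n - 2‖
      ≤ Real.Gamma (n + 3 / 2) / ((n + 1).factorial : ℝ) * t ^ (2 * n + 2) :=
        div_le_self hr0 hnorm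
    _ ≤ Real.sqrt Real.pi * t ^ (2 * n + 2) := hle1
    _ = (Real.sqrt Real.pi * t ^ 2) * (t ^ 2) ^ n := by rw [← pow_mul]; ring

lemma term_eq (t : ℝ) (s : ℂ) (hs : ∀ n : ℕ, s ≠ 2 * n + 2) (m : ℕ) :
    cpoch (-s / 2) (m + 1) * cpoch (1 / 2) (m + 1) /
        (cpoch (1 - s / 2) (m + 1) * ((m + 1).factorial : ℂ)) * ((t ^ 2 : ℝ) : ℂ) ^ (m + 1)
      = s / Real.sqrt Real.pi *
        (((Real.Gamma (m + 3 / 2) / ((m + 1).factorial : ℝ) * t ^ (2 * m + 2) : ℝ) : ℂ) /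
          (s - 2 * m - 2)) := by
  have hπ : (0 : ℝ) < Real.pi := Real.pi_pos
  have hsq : (Real.sqrt Real.pi : ℂ) ≠ 0 := by
    exact_mod_cast (Real.sqrt_pos.mpr hπ).ne'
  have hP : cpoch (1 - s / 2) m ≠ 0 := by
    unfold cpoch
    rw [Finset.prod_ne_zero_iff]
    intro i _ h
    exact hs i (by linear_combination -2 * h)
  have h1 : (1 : ℂ) - s / 2 + m ≠ 0 := by
    intro h
    exact hs m (by linear_combination -2 * h)
  have hs2 : s - 2 * m - 2 ≠ 0 := by
    intro h
    exact hs m (by linear_combination h)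
  have hF : ((m + 1).factorial : ℂ) ≠ 0 := by
    exact_mod_cast (Nat.factorial_pos (m + 1)).ne'
  have hgam : (Real.Gamma (m + 3 / 2) : ℂ) =
      (Real.sqrt Real.pi : ℂ) * cpoch (1 / 2) (m + 1) := by
    have hgp := gamma_prod m
    have h2 : cpoch (1 / 2) (m + 1) = ∏ i ∈ Finset.range (m + 1), ((1 : ℂ) / 2 + i) := rfl
    rw [h2, hgp]
    push_cast
    congr 1
    apply Finset.prod_congr rfl
    intro i _
    ring
  have hgam' : cpoch (1 / 2) (m + 1) =
      (Real.Gamma (m + 3 / 2) : ℂ) / (Real.sqrt Real.pi : ℂ) := by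
    rw [hgam]; field_simp
  have hshift : cpoch (-s / 2) (m + 1) = (-s / 2) * cpoch (1 - s / 2) m := by
    rw [cpoch_shift]
    congr 2
    ring
  have hpow : ((t ^ 2 : ℝ) : ℂ) ^ (m + 1) = (t : ℂ) ^ (2 * m + 2) := by
    push_cast
    rw [← pow_mul]
    ring_nf
  rw [hgam', hshift, cpoch_succ, hpow]
  have hB : cpoch (1 - s / 2) m * (1 - s / 2 + (m : ℂ)) * ((m + 1).factorial : ℂ) ≠ 0 :=
    mul_ne_zero (mul_ne_zero hP h1) hF
  rw [div_mul_eq_mul_div, div_eq_iff hB]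
  push_cast
  field_simp
  ring

theorem omega_plus_identity (t : ℝ) (ht0 : 0 < t) (ht1 : t < 1)
    (s : ℂ) (hs0 : s ≠ 0) (hs : ∀ n : ℕ, s ≠ 2 * n + 2) :
    (2 / Real.pi : ℂ) * ∑' n : ℕ,
        ((Real.Gamma (n + 3 / 2) / ((n + 1).factorial : ℝ) * t ^ (2 * n + 2) : ℝ) : ℂ) /
          (s - 2 * n - 2) =
      -2 / (Real.sqrt Real.pi * s) +
        2 / (Real.sqrt Real.pi * s) * hypC (-s / 2) (1 / 2) (1 - s / 2) ((t ^ 2 : ℝ) : ℂ) := by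
  have hπ : (0 : ℝ) < Real.pi := Real.pi_pos
  have hsq : (Real.sqrt Real.pi : ℂ) ≠ 0 := by
    exact_mod_cast (Real.sqrt_pos.mpr hπ).ne'
  have hπC : (Real.pi : ℂ) ≠ 0 := by exact_mod_cast hπ.ne'
  have hsqsq : (Real.sqrt Real.pi : ℂ) * (Real.sqrt Real.pi : ℂ) = (Real.pi : ℂ) := by
    norm_cast
    exact Real.mul_self_sqrt hπ.le
  set a : ℕ → ℂ := fun n =>
    ((Real.Gamma (n + 3 / 2) / ((n + 1).factorial : ℝ) * t ^ (2 * n + 2) : ℝ) : ℂ) /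
      (s - 2 * n - 2) with ha
  set b : ℕ → ℂ := fun n =>
    cpoch (-s / 2) n * cpoch (1 / 2) n / (cpoch (1 - s / 2) n * (n.factorial : ℂ)) *
      ((t ^ 2 : ℝ) : ℂ) ^ n with hbdef
  have hA : Summable a := summable_a t ht0 ht1 s
  have hb1 : ∀ n : ℕ, b (n + 1) = s / Real.sqrt Real.pi * a n := fun n => term_eq t s hs n
  have hBtail : Summable (fun n => b (n + 1)) := by
    simp only [hb1]
    exact hA.mul_left _
  have hB : Summable b := (summable_nat_add_iff 1).mp hBtail
  have hb0 : b 0 = 1 := by simp [hbdef, cpoch]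
  have hhyp : hypC (-s / 2) (1 / 2) (1 - s / 2) ((t ^ 2 : ℝ) : ℂ) = ∑' n, b n := rfl
  rw [hhyp, Summable.tsum_eq_zero_add hB, hb0, tsum_congr hb1, tsum_mul_left]
  set T : ℂ := ∑' n, a n
  field_simp
  linear_combination (T * s) * hsqsq
end

section
/- Let 0 < λ < 1 and δ* ∈ ℝ. Define sequences a_{n,k}, b_{n,k} (n,k ≥ 0) by: a_{n,0} = −δ*/(2π(n+1/2)), b_{n,0} = 0, a_{n,j} = b_{0,j}/(2π(n+1/2)) and b_{n,j} = 2a_{0,j−1}/(π(n+1/2)) for j = 1,2, and for p ≥ 0 and j ∈ {1,2}: a_{n,j+2p} = (1/(2π)) Σ_{k=0}^p b_{k,j+2p−2k}/(n+k+1/2), b_{n,j+2p} = (2/π) Σ_{k=0}^p a_{k,j+2p−2k−1}/(n+k+1/2). Then A_n⁺ = λ^{2n+1} Σ_{k≥0} a_{n,k} λ^k and B_n⁻ = λ^{2n} Σ_{k≥0} b_{n,k} λ^k converge and satisfy the infinite system B_n⁻ = (2λ^{2n}/π) Σ_{m≥0} A_m⁺/(n+m+1/2) and A_n⁺ = (λ^{2n+1}/(2π))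 Σ_{m≥0} B_m⁻/(n+m+1/2) − λ^{2n+1} δ*/(π(2n+1)) for all n ≥ 0. -/
open Real Finset

noncomputable def Wc (n : ℕ) : ℝ := (Nat.centralBinom n : ℝ) / 4 ^ n

lemma Wc_pos (n : ℕ) : 0 < Wc n := by
  apply div_pos (by exact_mod_cast Nat.centralBinom_pos n) (by positivity)

lemma Wc_zero : Wc 0 = 1 := by simp [Wc, Nat.centralBinom]

lemma Wc_succ (n : ℕ) : (2 * (n : ℝ) + 2) * Wc (n + 1) = (2 * n + 1) * Wc n := by
  have h := Nat.succ_mul_centralBinom_succ n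
  have h' : ((n : ℝ) + 1) * (Nat.centralBinom (n + 1) : ℝ)
      = 2 * (2 * n + 1) * (Nat.centralBinom n : ℝ) := by exact_mod_cast congrArg (Nat.cast (R := ℝ)) h
  have h4 : (4 : ℝ) ^ (n + 1) = 4 * 4 ^ n := by ring
  unfold Wc
  rw [h4]
  rw [mul_div_assoc', mul_div_assoc', div_eq_div_iff (by positivity) (by positivity)]
  linear_combination (2 * (4:ℝ)^n) * h'

lemma Wc_le_one (n : ℕ) : Wc n ≤ 1 := by
  induction n with
  | zero => simp [Wc_zero]
  | succ k ih =>
    have h := Wc_succ k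
    have hk : (0:ℝ) < 2 * k + 2 := by positivity
    have : Wc (k+1) = (2*k+1)/(2*k+2) * Wc k := by
      field_simp at h ⊢; linarith [h]
    rw [this]
    have h1 : (2*(k:ℝ)+1)/(2*k+2) ≤ 1 := by
      rw [div_le_one hk]; linarith
    nlinarith [Wc_pos k, (Wc_pos (k+1)).le]

-- reflection: ∑ 2i W i W (N-i) = N * T N
lemma Wc_refl (N : ℕ) :
    ∑ i ∈ range (N + 1), (2 * (i : ℝ)) * (Wc i * Wc (N - i))
      = N * ∑ i ∈ range (N + 1), Wc i * Wc (N - i) := by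
  have h := Finset.sum_range_reflect (fun i => (2 * (i : ℝ)) * (Wc i * Wc (N - i))) (N + 1)
  -- h : ∑ j in range (N+1), f (N + 1 - 1 - j) = ∑ j in range (N+1), f j
  have h2 : ∀ j ∈ range (N + 1),
      (2 * ((N - j : ℕ) : ℝ)) * (Wc (N - j) * Wc (N - (N - j)))
        = (2 * (N : ℝ) - 2 * j) * (Wc j * Wc (N - j)) := by
    intro j hj
    rw [Finset.mem_range, Nat.lt_succ_iff] at hj
    rw [Nat.sub_sub_self hj, Nat.cast_sub hj]
    ring
  rw [Finset.sum_congr rfl (by intro j hj; simpa using h2 j hj)] at h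
  -- now h : ∑ (2N - 2j) * (Wc j * Wc (N-j)) = ∑ 2j * (Wc j * Wc (N-j))
  have h3 : ∑ j ∈ range (N + 1), (2 * (N : ℝ) - 2 * j) * (Wc j * Wc (N - j))
      = 2 * N * (∑ j ∈ range (N + 1), Wc j * Wc (N - j))
        - ∑ j ∈ range (N + 1), (2 * (j : ℝ)) * (Wc j * Wc (N - j)) := by
    rw [Finset.mul_sum, ← Finset.sum_sub_distrib]
    congr 1; ext j; ring
  rw [h3] at h
  linarith [h]

lemma Wc_conv (m : ℕ) : ∑ i ∈ range (m + 1), Wc i * Wc (m - i) = 1 := by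
  induction m with
  | zero => simp [Wc_zero]
  | succ m ih =>
    have key : ((m : ℝ) + 1) * ∑ i ∈ range (m + 2), Wc i * Wc (m + 1 - i)
        = ((m : ℝ) + 1) * ∑ i ∈ range (m + 1), Wc i * Wc (m - i) := by
      have hL := Wc_refl (m + 1)
      -- LHS sum with 2i weights, shift index
      have hshift : ∑ i ∈ range (m + 2), (2 * (i : ℝ)) * (Wc i * Wc (m + 1 - i))
          = ∑ i ∈ range (m + 1), (2 * ((i : ℝ) + 1)) * (Wc (i + 1) * Wc (m - i)) := by
        rw [Finset.sum_range_succ' (fun i => (2 * (i : ℝ)) * (Wc i * Wc (m + 1 - i))) (m+1)]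
        simp only [Nat.cast_zero, mul_zero, zero_mul, add_zero]
        apply Finset.sum_congr rfl
        intro i hi
        have : m + 1 - (i + 1) = m - i := by omega
        rw [this]
        push_cast
        ring
      have hrec : ∀ i : ℕ, (2 * ((i : ℝ) + 1)) * (Wc (i + 1) * Wc (m - i))
          = (2 * (i : ℝ) + 1) * (Wc i * Wc (m - i)) := by
        intro i
        have := Wc_succ i
        nlinarith [this, Wc_pos (m - i)]
      have hM := Wc_refl m
      have hcomb : ∑ i ∈ range (m + 1), (2 * (i : ℝ) + 1) * (Wc i * Wc (m - i))
          = ((m : ℝ) + 1) * ∑ i ∈ range (m + 1), Wc i * Wc (m - i) := by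
        have : ∑ i ∈ range (m + 1), (2 * (i : ℝ) + 1) * (Wc i * Wc (m - i))
            = (∑ i ∈ range (m + 1), (2 * (i : ℝ)) * (Wc i * Wc (m - i)))
              + ∑ i ∈ range (m + 1), Wc i * Wc (m - i) := by
          rw [← Finset.sum_add_distrib]
          congr 1; ext i; ring
        rw [this, hM]; ring
      calc ((m : ℝ) + 1) * ∑ i ∈ range (m + 2), Wc i * Wc (m + 1 - i)
          = ((m : ℝ) + 1) * ∑ i ∈ range (m + 2), Wc i * Wc (m + 1 - i) := rfl
        _ = ∑ i ∈ range (m + 2), (2 * (i : ℝ)) * (Wc i * Wc (m + 1 - i)) := by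
            rw [hL]; push_cast; ring
        _ = ∑ i ∈ range (m + 1), (2 * ((i : ℝ) + 1)) * (Wc (i + 1) * Wc (m - i)) := hshift
        _ = ∑ i ∈ range (m + 1), (2 * (i : ℝ) + 1) * (Wc i * Wc (m - i)) := by
            apply Finset.sum_congr rfl; intro i _; exact hrec i
        _ = ((m : ℝ) + 1) * ∑ i ∈ range (m + 1), Wc i * Wc (m - i) := hcomb
    have hm1 : ((m : ℝ) + 1) ≠ 0 := by positivity
    have := mul_left_cancel₀ hm1 key
    rw [this, ih]

lemma Wc_term_nonneg {x : ℝ} (hx0 : 0 ≤ x) (k : ℕ) : 0 ≤ Wc k * x ^ k :=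
  mul_nonneg (Wc_pos k).le (pow_nonneg hx0 k)

lemma Wc_summable {x : ℝ} (hx0 : 0 ≤ x) (hx1 : x < 1) : Summable (fun k => Wc k * x ^ k) := by
  apply Summable.of_nonneg_of_le (Wc_term_nonneg hx0)
    (fun k => ?_) (summable_geometric_of_lt_one hx0 hx1)
  calc Wc k * x ^ k ≤ 1 * x ^ k := by
        apply mul_le_mul_of_nonneg_right (Wc_le_one k) (pow_nonneg hx0 k)
    _ = x ^ k := one_mul _

lemma Wc_tsum_sq {x : ℝ} (hx0 : 0 ≤ x) (hx1 : x < 1) :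
    (∑' k, Wc k * x ^ k) * (∑' k, Wc k * x ^ k) = (1 - x)⁻¹ := by
  have hnorm : Summable (fun k => ‖Wc k * x ^ k‖) := by
    have : (fun k => ‖Wc k * x ^ k‖) = fun k => Wc k * x ^ k := by
      funext k; exact Real.norm_of_nonneg (Wc_term_nonneg hx0 k)
    rw [this]; exact Wc_summable hx0 hx1
  rw [tsum_mul_tsum_eq_tsum_sum_antidiagonal_of_summable_norm hnorm hnorm]
  have hinner : ∀ m : ℕ, ∑ kl ∈ Finset.HasAntidiagonal.antidiagonal m, (Wc kl.1 * x ^ kl.1) * (Wc kl.2 * x ^ kl.2)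
      = x ^ m := by
    intro m
    rw [Finset.Nat.sum_antidiagonal_eq_sum_range_succ_mk]
    have hstep : ∀ i ∈ range (m + 1), (Wc i * x ^ i) * (Wc (m - i) * x ^ (m - i))
        = (Wc i * Wc (m - i)) * x ^ m := by
      intro i hi
      rw [Finset.mem_range, Nat.lt_succ_iff] at hi
      have hxp : x ^ i * x ^ (m - i) = x ^ m := by
        rw [← pow_add]; congr 1; omega
      calc (Wc i * x ^ i) * (Wc (m - i) * x ^ (m - i))
          = (Wc i * Wc (m - i)) * (x ^ i * x ^ (m - i)) := by ring
        _ = (Wc i * Wc (m - i)) * x ^ m := by rw [hxp]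
    rw [Finset.sum_congr rfl hstep, ← Finset.sum_mul, Wc_conv, one_mul]
  rw [tsum_congr hinner, tsum_geometric_of_lt_one hx0 hx1]

lemma Wc_partial_cos_le {θ : ℝ} (hθ : θ ∈ Set.Icc 0 (π/2)) (K : ℕ) :
    (∑ k ∈ range K, Wc k * (sin θ ^ 2) ^ k) * cos θ ≤ 1 := by
  obtain ⟨h0, h1⟩ := hθ
  have hcos : 0 ≤ cos θ := Real.cos_nonneg_of_mem_Icc ⟨by linarith [Real.pi_pos], h1⟩
  rcases eq_or_lt_of_le hcos with hc0 | hcpos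
  · rw [← hc0, mul_zero]; norm_num
  · set x := sin θ ^ 2 with hxdef
    have hx0 : 0 ≤ x := sq_nonneg _
    have hcossq : cos θ ^ 2 = 1 - x := by
      rw [hxdef, ← Real.sin_sq_add_cos_sq θ]; ring
    have hx1 : x < 1 := by nlinarith [hcpos]
    have hsum := Wc_summable hx0 hx1
    have hP_le : (∑ k ∈ range K, Wc k * x ^ k) ≤ ∑' k, Wc k * x ^ k :=
      Summable.sum_le_tsum _ (fun k _ => Wc_term_nonneg hx0 k) hsum
    have hS : (∑' k, Wc k * x ^ k) * cos θ = 1 := by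
      have h2 : ((∑' k, Wc k * x ^ k) * cos θ) ^ 2 = 1 := by
        have hts := Wc_tsum_sq hx0 hx1
        have h1x : (1 - x) ≠ 0 := by nlinarith
        calc ((∑' k, Wc k * x ^ k) * cos θ) ^ 2
            = ((∑' k, Wc k * x ^ k) * (∑' k, Wc k * x ^ k)) * (cos θ ^ 2) := by ring
          _ = (1 - x)⁻¹ * (1 - x) := by rw [hts, hcossq]
          _ = 1 := inv_mul_cancel₀ h1x
      have hge : 0 ≤ (∑' k, Wc k * x ^ k) * cos θ :=
        mul_nonneg (tsum_nonneg (Wc_term_nonneg hx0)) hcos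
      nlinarith [h2, hge]
    calc (∑ k ∈ range K, Wc k * x ^ k) * cos θ
        ≤ (∑' k, Wc k * x ^ k) * cos θ := mul_le_mul_of_nonneg_right hP_le hcos
      _ = 1 := hS

lemma int_pow_mul_cos (m : ℕ) :
    ∫ x in (0:ℝ)..(π/2), sin x ^ m * cos x = 1 / (m + 1) := by
  have h := integral_sin_pow_mul_cos_pow_odd (a := 0) (b := π/2) m 0
  simp only [mul_zero, zero_add, pow_one, pow_zero, mul_one, Real.sin_zero,
    Real.sin_pi_div_two] at h
  rw [h, integral_pow]
  norm_num

lemma int_sin_even (n : ℕ) :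
    ∫ x in (0:ℝ)..(π/2), sin x ^ (2 * n) = π / 2 * Wc n := by
  induction n with
  | zero => simp [Wc_zero]
  | succ n ih =>
    have h := integral_sin_pow (a := 0) (b := π/2) (2 * n)
    have h2 : 2 * (n + 1) = 2 * n + 2 := by ring
    rw [h2, h, Real.sin_zero, Real.cos_pi_div_two, ih]
    have hz : (0:ℝ) ^ (2 * n + 1) = 0 := zero_pow (by omega)
    rw [hz]
    have hW := Wc_succ n
    have hpos : (2 * (n:ℝ) + 2) ≠ 0 := by positivity
    have : Wc (n + 1) = (2 * n + 1) / (2 * n + 2) * Wc n := by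
      field_simp
      linarith [hW]
    rw [this]
    push_cast
    field_simp
    ring

lemma key_row (n K : ℕ) :
    ∑ k ∈ range K, Wc k / ((n : ℝ) + k + 1/2) ≤ π * Wc n := by
  have hterm : ∀ k : ℕ, Wc k / ((n : ℝ) + k + 1/2)
      = ∫ x in (0:ℝ)..(π/2), 2 * Wc k * (sin x ^ (2*(n+k)) * cos x) := by
    intro k
    rw [intervalIntegral.integral_const_mul, int_pow_mul_cos]
    push_cast
    field_simp
  calc ∑ k ∈ range K, Wc k / ((n : ℝ) + k + 1/2)
      = ∑ k ∈ range K, ∫ x in (0:ℝ)..(π/2), 2 * Wc k * (sin x ^ (2*(n+k)) * cos x) := by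
        exact Finset.sum_congr rfl (fun k _ => hterm k)
    _ = ∫ x in (0:ℝ)..(π/2), ∑ k ∈ range K, 2 * Wc k * (sin x ^ (2*(n+k)) * cos x) := by
        rw [intervalIntegral.integral_finset_sum]
        intro k _
        apply Continuous.intervalIntegrable
        fun_prop
    _ ≤ ∫ x in (0:ℝ)..(π/2), 2 * sin x ^ (2*n) := by
        apply intervalIntegral.integral_mono_on (by positivity)
        · apply Continuous.intervalIntegrable; fun_prop
        · apply Continuous.intervalIntegrable; fun_prop
        · intro x hx
          have hsin : 0 ≤ sin x := Real.sin_nonneg_of_nonneg_of_le_pi hx.1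
            (by linarith [hx.2, Real.pi_pos])
          have hsum : ∀ k : ℕ, 2 * Wc k * (sin x ^ (2*(n+k)) * cos x)
              = 2 * sin x ^ (2*n) * (Wc k * (sin x ^ 2) ^ k * cos x) := by
            intro k
            rw [← pow_mul]
            have : 2*(n+k) = 2*n + 2*k := by ring
            rw [this, pow_add]
            ring
          rw [Finset.sum_congr rfl (fun k _ => hsum k), ← Finset.mul_sum, ← Finset.sum_mul]
          have hb := Wc_partial_cos_le (θ := x) ⟨hx.1, hx.2⟩ K
          have hpow : (0:ℝ) ≤ 2 * sin x ^ (2*n) := by positivity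
          calc 2 * sin x ^ (2*n) * ((∑ k ∈ range K, Wc k * (sin x ^ 2) ^ k) * cos x)
              ≤ 2 * sin x ^ (2*n) * 1 := mul_le_mul_of_nonneg_left hb hpow
            _ = 2 * sin x ^ (2*n) := mul_one _
    _ = π * Wc n := by
        rw [intervalIntegral.integral_const_mul, int_sin_even]
        ring

section main
variable (lam δs : ℝ) (a b : ℕ → ℕ → ℝ)

lemma key_row0 (n : ℕ) : 1 / ((n : ℝ) + 1/2) ≤ π * Wc n := by
  have h := key_row n 1
  simp only [Finset.sum_range_one, Nat.cast_zero] at h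
  have : Wc 0 = 1 := by simp [Wc, Nat.centralBinom]
  rw [this] at h
  simpa using h

lemma swap_tri (M : ℕ) (G : ℕ → ℕ → ℝ) :
    ∑ m ∈ Finset.Ico 1 (M+1), ∑ k ∈ range ((m-1)/2 + 1), G m k
      = ∑ k ∈ range (M+1), ∑ r ∈ range (M - 2*k), G (2*k+1+r) k := by
  have step1 : ∀ m ∈ Finset.Ico 1 (M+1),
      ∑ k ∈ range ((m-1)/2 + 1), G m k
        = ∑ k ∈ range (M+1), if 2*k+1 ≤ m then G m k else 0 := by
    intro m hm
    rw [Finset.mem_Ico] at hm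
    rw [← Finset.sum_filter]
    apply Finset.sum_congr _ (fun k _ => rfl)
    ext k
    simp only [Finset.mem_range, Finset.mem_filter]
    omega
  rw [Finset.sum_congr rfl step1, Finset.sum_comm]
  apply Finset.sum_congr rfl
  intro k _
  rw [← Finset.sum_filter]
  have hfil : (Finset.Ico 1 (M+1)).filter (fun m => 2*k+1 ≤ m) = Finset.Ico (2*k+1) (M+1) := by
    ext m
    simp only [Finset.mem_Ico, Finset.mem_filter]
    omega
  rw [hfil, Finset.sum_Ico_eq_sum_range]
  have h2 : M + 1 - (2*k+1) = M - 2*k := by omega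
  rw [h2]

theorem main_bound (hlam0 : 0 < lam) (hlam1 : lam < 1)
    (ha0 : ∀ n : ℕ, a n 0 = -δs / (2 * π * (n + 1 / 2)))
    (hb0 : ∀ n : ℕ, b n 0 = 0)
    (harec : ∀ n p : ℕ, ∀ j : ℕ, (j = 1 ∨ j = 2) →
      a n (j + 2 * p) =
        (1 / (2 * π)) * ∑ k ∈ Finset.range (p + 1), b k (j + 2 * p - 2 * k) / (n + k + 1 / 2))
    (hbrec : ∀ n p : ℕ, ∀ j : ℕ, (j = 1 ∨ j = 2) →
      b n (j + 2 * p) =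
        (2 / π) * ∑ k ∈ Finset.range (p + 1), a k (j + 2 * p - 2 * k - 1) / (n + k + 1 / 2)) :
    ∀ M n : ℕ, (∑ m ∈ range M, |a n m| * lam ^ m ≤ (|δs| / (2 * (1 - lam))) * Wc n)
      ∧ (∑ m ∈ range M, |b n m| * lam ^ m ≤ (lam * |δs| / (1 - lam)) * Wc n) := by
  have hπ : (0:ℝ) < π := Real.pi_pos
  set Ca := |δs| / (2 * (1 - lam)) with hCa
  set Cb := lam * |δs| / (1 - lam) with hCb
  have h1lam : (0:ℝ) < 1 - lam := by linarith
  have hCa0 : 0 ≤ Ca := by positivity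
  have hCb0 : 0 ≤ Cb := by positivity
  have hCbCa : Cb = 2 * lam * Ca := by rw [hCa, hCb]; field_simp
  have hden : ∀ n k : ℕ, (0:ℝ) < (n:ℝ) + k + 1/2 := by intro n k; positivity
  have ha0abs : ∀ n : ℕ, |a n 0| ≤ (|δs| / 2) * Wc n := by
    intro n
    rw [ha0 n, abs_div]
    have hd : |2 * π * ((n:ℝ) + 1/2)| = 2 * π * ((n:ℝ) + 1/2) := abs_of_pos (by positivity)
    rw [hd, abs_neg, div_le_iff₀ (by positivity)]
    have hk := key_row0 n
    have hn2 : (0:ℝ) < (n:ℝ) + 1/2 := by positivity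
    rw [div_le_iff₀ hn2] at hk
    calc |δs| = |δs| * 1 := (mul_one _).symm
      _ ≤ |δs| * (π * Wc n * ((n:ℝ) + 1/2)) := by
          apply mul_le_mul_of_nonneg_left _ (abs_nonneg δs)
          simpa using hk
      _ = |δs| / 2 * Wc n * (2 * π * ((n:ℝ) + 1/2)) := by ring
  intro M
  induction M with
  | zero =>
      intro n
      constructor <;> simp [mul_nonneg hCa0 (Wc_pos n).le, mul_nonneg hCb0 (Wc_pos n).le]
  | succ M IH =>
    have hbpart : ∀ n : ℕ, ∑ m ∈ range (M+1), |b n m| * lam ^ m ≤ Cb * Wc n := by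
      intro n
      have hsplit : ∑ m ∈ range (M+1), |b n m| * lam ^ m
          = ∑ m ∈ Finset.Ico 1 (M+1), |b n m| * lam ^ m := by
        rw [Finset.range_eq_Ico, Finset.sum_eq_sum_Ico_succ_bot (by omega), hb0 n]
        simp
      rw [hsplit]
      have hterm : ∀ m ∈ Finset.Ico 1 (M+1), |b n m| * lam ^ m
          ≤ (2/π) * ∑ k ∈ range ((m-1)/2 + 1),
              |a k (m - 1 - 2*k)| * lam ^ m / ((n:ℝ) + k + 1/2) := by
        intro m hm
        rw [Finset.mem_Ico] at hm
        obtain ⟨hm1, hm2⟩ := hm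
        have hj : (m - 2*((m-1)/2) = 1 ∨ m - 2*((m-1)/2) = 2) ∧ m = (m - 2*((m-1)/2)) + 2*((m-1)/2) := by
          omega
        have hbv := hbrec n ((m-1)/2) (m - 2*((m-1)/2)) hj.1
        rw [← hj.2] at hbv
        rw [hbv, abs_mul, abs_of_pos (by positivity : (0:ℝ) < 2/π), mul_assoc]
        apply mul_le_mul_of_nonneg_left _ (by positivity : (0:ℝ) ≤ 2/π)
        calc |∑ k ∈ range ((m-1)/2 + 1), a k (m - 2*k - 1) / ((n:ℝ) + k + 1/2)| * lam ^ m
            ≤ (∑ k ∈ range ((m-1)/2 + 1), |a k (m - 2*k - 1) / ((n:ℝ) + k + 1/2)|) * lam ^ m := by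
              apply mul_le_mul_of_nonneg_right (Finset.abs_sum_le_sum_abs _ _)
                (pow_nonneg hlam0.le m)
          _ = ∑ k ∈ range ((m-1)/2 + 1), |a k (m - 1 - 2*k)| * lam ^ m / ((n:ℝ) + k + 1/2) := by
              rw [Finset.sum_mul]
              apply Finset.sum_congr rfl
              intro k hk
              rw [abs_div, abs_of_pos (hden n k)]
              have hidx : m - 2*k - 1 = m - 1 - 2*k := by omega
              rw [hidx]
              ring
      calc ∑ m ∈ Finset.Ico 1 (M+1), |b n m| * lam ^ m
          ≤ ∑ m ∈ Finset.Ico 1 (M+1), (2/π) * ∑ k ∈ range ((m-1)/2 + 1),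
              |a k (m - 1 - 2*k)| * lam ^ m / ((n:ℝ) + k + 1/2) := Finset.sum_le_sum hterm
        _ = (2/π) * ∑ m ∈ Finset.Ico 1 (M+1), ∑ k ∈ range ((m-1)/2 + 1),
              |a k (m - 1 - 2*k)| * lam ^ m / ((n:ℝ) + k + 1/2) := by
            rw [Finset.mul_sum]
        _ = (2/π) * ∑ k ∈ range (M+1), ∑ r ∈ range (M - 2*k),
              |a k (2*k+1+r - 1 - 2*k)| * lam ^ (2*k+1+r) / ((n:ℝ) + k + 1/2) := by
            rw [swap_tri M (fun m k => |a k (m - 1 - 2*k)| * lam ^ m / ((n:ℝ) + k + 1/2))]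
        _ ≤ (2/π) * ∑ k ∈ range (M+1), lam * Ca * (Wc k / ((n:ℝ) + k + 1/2)) := by
            apply mul_le_mul_of_nonneg_left _ (by positivity : (0:ℝ) ≤ 2/π)
            apply Finset.sum_le_sum
            intro k _
            have hinner : ∑ r ∈ range (M - 2*k),
                |a k (2*k+1+r - 1 - 2*k)| * lam ^ (2*k+1+r) / ((n:ℝ) + k + 1/2)
                = (lam ^ (2*k+1) / ((n:ℝ) + k + 1/2)) * ∑ r ∈ range (M - 2*k), |a k r| * lam ^ r := by
              rw [Finset.mul_sum]
              apply Finset.sum_congr rfl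
              intro r _
              have hidx : 2*k+1+r - 1 - 2*k = r := by omega
              rw [hidx, pow_add]
              ring
            rw [hinner]
            have hs1 : ∑ r ∈ range (M - 2*k), |a k r| * lam ^ r ≤ Ca * Wc k := by
              calc ∑ r ∈ range (M - 2*k), |a k r| * lam ^ r
                  ≤ ∑ r ∈ range M, |a k r| * lam ^ r := by
                    apply Finset.sum_le_sum_of_subset_of_nonneg
                      (Finset.range_subset_range.mpr (by omega))
                    intro i _ _
                    positivity
                _ ≤ Ca * Wc k := (IH k).1
            have hs2 : lam ^ (2*k+1) ≤ lam := by
              calc lam ^ (2*k+1) ≤ lam ^ 1 :=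
                    pow_le_pow_of_le_one hlam0.le hlam1.le (by omega)
                _ = lam := pow_one lam
            have h0 : (0:ℝ) ≤ lam ^ (2*k+1) := pow_nonneg hlam0.le _
            calc lam ^ (2*k+1) / ((n:ℝ) + k + 1/2) * ∑ r ∈ range (M - 2*k), |a k r| * lam ^ r
                ≤ lam ^ (2*k+1) / ((n:ℝ) + k + 1/2) * (Ca * Wc k) := by
                  apply mul_le_mul_of_nonneg_left hs1 (by positivity)
              _ ≤ lam / ((n:ℝ) + k + 1/2) * (Ca * Wc k) := by
                  apply mul_le_mul_of_nonneg_right _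
                    (mul_nonneg hCa0 (Wc_pos k).le)
                  apply div_le_div_of_nonneg_right hs2 (hden n k).le
              _ = lam * Ca * (Wc k / ((n:ℝ) + k + 1/2)) := by ring
        _ = (2/π) * (lam * Ca) * ∑ k ∈ range (M+1), Wc k / ((n:ℝ) + k + 1/2) := by
            rw [← Finset.mul_sum]; ring
        _ ≤ (2/π) * (lam * Ca) * (π * Wc n) := by
            apply mul_le_mul_of_nonneg_left (key_row n (M+1)) (by positivity)
        _ = Cb * Wc n := by
            rw [hCbCa]; field_simp
    -- a-part at level M+1
    have hapart : ∀ n : ℕ, ∑ m ∈ range (M+1), |a n m| * lam ^ m ≤ Ca * Wc n := by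
      intro n
      have hsplit : ∑ m ∈ range (M+1), |a n m| * lam ^ m
          = |a n 0| + ∑ m ∈ Finset.Ico 1 (M+1), |a n m| * lam ^ m := by
        rw [Finset.range_eq_Ico, Finset.sum_eq_sum_Ico_succ_bot (by omega)]
        simp
      rw [hsplit]
      have hterm : ∀ m ∈ Finset.Ico 1 (M+1), |a n m| * lam ^ m
          ≤ (1/(2*π)) * ∑ k ∈ range ((m-1)/2 + 1),
              |b k (m - 2*k)| * lam ^ m / ((n:ℝ) + k + 1/2) := by
        intro m hm
        rw [Finset.mem_Ico] at hm
        obtain ⟨hm1, hm2⟩ := hm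
        have hj : (m - 2*((m-1)/2) = 1 ∨ m - 2*((m-1)/2) = 2) ∧ m = (m - 2*((m-1)/2)) + 2*((m-1)/2) := by
          omega
        have hav := harec n ((m-1)/2) (m - 2*((m-1)/2)) hj.1
        rw [← hj.2] at hav
        rw [hav, abs_mul, abs_of_pos (by positivity : (0:ℝ) < 1/(2*π)), mul_assoc]
        apply mul_le_mul_of_nonneg_left _ (by positivity : (0:ℝ) ≤ 1/(2*π))
        calc |∑ k ∈ range ((m-1)/2 + 1), b k (m - 2*k) / ((n:ℝ) + k + 1/2)| * lam ^ m
            ≤ (∑ k ∈ range ((m-1)/2 + 1), |b k (m - 2*k) / ((n:ℝ) + k + 1/2)|) * lam ^ m := by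
              apply mul_le_mul_of_nonneg_right (Finset.abs_sum_le_sum_abs _ _)
                (pow_nonneg hlam0.le m)
          _ = ∑ k ∈ range ((m-1)/2 + 1), |b k (m - 2*k)| * lam ^ m / ((n:ℝ) + k + 1/2) := by
              rw [Finset.sum_mul]
              apply Finset.sum_congr rfl
              intro k hk
              rw [abs_div, abs_of_pos (hden n k)]
              ring
      have hmain : ∑ m ∈ Finset.Ico 1 (M+1), |a n m| * lam ^ m ≤ (Cb/2) * Wc n := by
        calc ∑ m ∈ Finset.Ico 1 (M+1), |a n m| * lam ^ m
            ≤ ∑ m ∈ Finset.Ico 1 (M+1), (1/(2*π)) * ∑ k ∈ range ((m-1)/2 + 1),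
                |b k (m - 2*k)| * lam ^ m / ((n:ℝ) + k + 1/2) := Finset.sum_le_sum hterm
          _ = (1/(2*π)) * ∑ m ∈ Finset.Ico 1 (M+1), ∑ k ∈ range ((m-1)/2 + 1),
                |b k (m - 2*k)| * lam ^ m / ((n:ℝ) + k + 1/2) := by
              rw [Finset.mul_sum]
          _ = (1/(2*π)) * ∑ k ∈ range (M+1), ∑ r ∈ range (M - 2*k),
                |b k (2*k+1+r - 2*k)| * lam ^ (2*k+1+r) / ((n:ℝ) + k + 1/2) := by
              rw [swap_tri M (fun m k => |b k (m - 2*k)| * lam ^ m / ((n:ℝ) + k + 1/2))]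
          _ ≤ (1/(2*π)) * ∑ k ∈ range (M+1), Cb * (Wc k / ((n:ℝ) + k + 1/2)) := by
              apply mul_le_mul_of_nonneg_left _ (by positivity : (0:ℝ) ≤ 1/(2*π))
              apply Finset.sum_le_sum
              intro k _
              have hinner : ∑ r ∈ range (M - 2*k),
                  |b k (2*k+1+r - 2*k)| * lam ^ (2*k+1+r) / ((n:ℝ) + k + 1/2)
                  = (lam ^ (2*k) / ((n:ℝ) + k + 1/2))
                      * ∑ r ∈ range (M - 2*k), |b k (r+1)| * lam ^ (r+1) := by
                rw [Finset.mul_sum]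
                apply Finset.sum_congr rfl
                intro r _
                have hidx : 2*k+1+r - 2*k = r + 1 := by omega
                rw [hidx]
                have hexp : 2*k+1+r = 2*k + (r+1) := by omega
                rw [hexp, pow_add]
                ring
              rw [hinner]
              have hs1 : ∑ r ∈ range (M - 2*k), |b k (r+1)| * lam ^ (r+1) ≤ Cb * Wc k := by
                have hre : ∑ r ∈ range (M - 2*k), |b k (r+1)| * lam ^ (r+1)
                    = ∑ m ∈ Finset.Ico 1 (M - 2*k + 1), |b k m| * lam ^ m := by
                  rw [Finset.sum_Ico_eq_sum_range]
                  have : M - 2*k + 1 - 1 = M - 2*k := by omega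
                  rw [this]
                  apply Finset.sum_congr rfl
                  intro r _
                  rw [Nat.add_comm 1 r]
                rw [hre]
                calc ∑ m ∈ Finset.Ico 1 (M - 2*k + 1), |b k m| * lam ^ m
                    ≤ ∑ m ∈ range (M+1), |b k m| * lam ^ m := by
                      apply Finset.sum_le_sum_of_subset_of_nonneg
                      · intro m hm
                        rw [Finset.mem_Ico] at hm
                        rw [Finset.mem_range]
                        omega
                      · intro i _ _
                        positivity
                  _ ≤ Cb * Wc k := hbpart k
              have hs2 : lam ^ (2*k) ≤ 1 := pow_le_one₀ hlam0.le hlam1.le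
              calc lam ^ (2*k) / ((n:ℝ) + k + 1/2) * ∑ r ∈ range (M - 2*k), |b k (r+1)| * lam ^ (r+1)
                  ≤ lam ^ (2*k) / ((n:ℝ) + k + 1/2) * (Cb * Wc k) := by
                    apply mul_le_mul_of_nonneg_left hs1 (by positivity)
                _ ≤ 1 / ((n:ℝ) + k + 1/2) * (Cb * Wc k) := by
                    apply mul_le_mul_of_nonneg_right _ (mul_nonneg hCb0 (Wc_pos k).le)
                    apply div_le_div_of_nonneg_right hs2 (hden n k).le
                _ = Cb * (Wc k / ((n:ℝ) + k + 1/2)) := by ring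
          _ = (1/(2*π)) * Cb * ∑ k ∈ range (M+1), Wc k / ((n:ℝ) + k + 1/2) := by
              rw [← Finset.mul_sum]; ring
          _ ≤ (1/(2*π)) * Cb * (π * Wc n) := by
              apply mul_le_mul_of_nonneg_left (key_row n (M+1)) (by positivity)
          _ = (Cb/2) * Wc n := by field_simp
      calc |a n 0| + ∑ m ∈ Finset.Ico 1 (M+1), |a n m| * lam ^ m
          ≤ (|δs| / 2) * Wc n + (Cb/2) * Wc n := add_le_add (ha0abs n) hmain
        _ = Ca * Wc n := by
            rw [hCbCa, hCa]
            field_simp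
            ring
    intro n
    exact ⟨hapart n, hbpart n⟩

end main

theorem recurrence_solves_system (lam δs : ℝ) (hlam0 : 0 < lam) (hlam1 : lam < 1)
    (a b : ℕ → ℕ → ℝ)
    (ha0 : ∀ n, a n 0 = -δs / (2 * π * (n + 1 / 2)))
    (hb0 : ∀ n, b n 0 = 0)
    (harec : ∀ n p : ℕ, ∀ j : ℕ, (j = 1 ∨ j = 2) →
      a n (j + 2 * p) =
        (1 / (2 * π)) * ∑ k ∈ Finset.range (p + 1), b k (j + 2 * p - 2 * k) / (n + k + 1 / 2))
    (hbrec1 : ∀ n : ℕ, ∀ j : ℕ, (j = 1 ∨ j = 2) →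
      b n j = 2 * a 0 (j - 1) / (π * (n + 1 / 2)))
    (hbrec : ∀ n p : ℕ, ∀ j : ℕ, (j = 1 ∨ j = 2) →
      b n (j + 2 * p) =
        (2 / π) * ∑ k ∈ Finset.range (p + 1), a k (j + 2 * p - 2 * k - 1) / (n + k + 1 / 2)) :
    (∀ n : ℕ, Summable (fun k : ℕ => a n k * lam ^ k)) ∧
    (∀ n : ℕ, Summable (fun k : ℕ => b n k * lam ^ k)) ∧
    (let A : ℕ → ℝ := fun n => lam ^ (2 * n + 1) * ∑' k : ℕ, a n k * lam ^ k
     let B : ℕ → ℝ := fun n => lam ^ (2 * n) * ∑' k : ℕ, b n k * lam ^ k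
     ∀ n : ℕ,
       B n = (2 * lam ^ (2 * n) / π) * ∑' m : ℕ, A m / (n + m + 1 / 2) ∧
       A n = (lam ^ (2 * n + 1) / (2 * π)) * (∑' m : ℕ, B m / (n + m + 1 / 2)) -
         lam ^ (2 * n + 1) * δs / (π * (2 * n + 1))) := by
  have hπ : (0:ℝ) < π := Real.pi_pos
  have h1lam : (0:ℝ) < 1 - lam := by linarith
  set Ca := |δs| / (2 * (1 - lam)) with hCadef
  set Cb := lam * |δs| / (1 - lam) with hCbdef
  have hCa0 : 0 ≤ Ca := by positivity
  have hCb0 : 0 ≤ Cb := by positivity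
  have hbound := main_bound lam δs a b hlam0 hlam1 ha0 hb0 harec hbrec
  have hden : ∀ n k : ℕ, (0:ℝ) < (n:ℝ) + k + 1/2 := by intro n k; positivity
  have hdeninv : ∀ n k : ℕ, 1 / ((n:ℝ) + k + 1/2) ≤ 2 := by
    intro n k
    rw [div_le_iff₀ (hden n k)]
    have h1 : (0:ℝ) ≤ (n:ℝ) := Nat.cast_nonneg n
    have h2 : (0:ℝ) ≤ (k:ℝ) := Nat.cast_nonneg k
    linarith
  -- absolute summability of rows
  have habs_eq : ∀ (c : ℕ → ℕ → ℝ) (n : ℕ),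
      (fun m => |c n m * lam ^ m|) = fun m => |c n m| * lam ^ m := by
    intro c n
    funext m
    rw [abs_mul, abs_of_pos (pow_pos hlam0 m)]
  have hSa_abs : ∀ n, Summable (fun m => |a n m| * lam ^ m) := by
    intro n
    apply summable_of_sum_range_le (c := Ca * Wc n)
      (fun m => mul_nonneg (abs_nonneg _) (pow_pos hlam0 m).le)
    intro K
    exact (hbound K n).1
  have hSb_abs : ∀ n, Summable (fun m => |b n m| * lam ^ m) := by
    intro n
    apply summable_of_sum_range_le (c := Cb * Wc n)
      (fun m => mul_nonneg (abs_nonneg _) (pow_pos hlam0 m).le)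
    intro K
    exact (hbound K n).2
  have hSa : ∀ n, Summable (fun m => a n m * lam ^ m) := by
    intro n
    apply Summable.of_abs
    rw [habs_eq a n]
    exact hSa_abs n
  have hSb : ∀ n, Summable (fun m => b n m * lam ^ m) := by
    intro n
    apply Summable.of_abs
    rw [habs_eq b n]
    exact hSb_abs n
  have htsum_a_abs : ∀ n, ∑' m, |a n m| * lam ^ m ≤ Ca * Wc n := by
    intro n
    apply Real.tsum_le_of_sum_range_le
      (fun m => mul_nonneg (abs_nonneg _) (pow_pos hlam0 m).le)
    intro K
    exact (hbound K n).1
  have htsum_b_abs : ∀ n, ∑' m, |b n m| * lam ^ m ≤ Cb * Wc n := by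
    intro n
    apply Real.tsum_le_of_sum_range_le
      (fun m => mul_nonneg (abs_nonneg _) (pow_pos hlam0 m).le)
    intro K
    exact (hbound K n).2
  have htA_bdd : ∀ n, |∑' m, a n m * lam ^ m| ≤ Ca := by
    intro n
    have h1 : ‖∑' m, a n m * lam ^ m‖ ≤ ∑' m, ‖a n m * lam ^ m‖ := by
      apply norm_tsum_le_tsum_norm
      simpa only [Real.norm_eq_abs, habs_eq a n] using hSa_abs n
    rw [Real.norm_eq_abs] at h1
    simp only [Real.norm_eq_abs, habs_eq a n] at h1
    calc |∑' m, a n m * lam ^ m| ≤ ∑' m, |a n m| * lam ^ m := h1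
      _ ≤ Ca * Wc n := htsum_a_abs n
      _ ≤ Ca * 1 := mul_le_mul_of_nonneg_left (Wc_le_one n) hCa0
      _ = Ca := mul_one _
  have htB_bdd : ∀ n, |∑' m, b n m * lam ^ m| ≤ Cb := by
    intro n
    have h1 : ‖∑' m, b n m * lam ^ m‖ ≤ ∑' m, ‖b n m * lam ^ m‖ := by
      apply norm_tsum_le_tsum_norm
      simpa only [Real.norm_eq_abs, habs_eq b n] using hSb_abs n
    rw [Real.norm_eq_abs] at h1
    simp only [Real.norm_eq_abs, habs_eq b n] at h1
    calc |∑' m, b n m * lam ^ m| ≤ ∑' m, |b n m| * lam ^ m := h1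
      _ ≤ Cb * Wc n := htsum_b_abs n
      _ ≤ Cb * 1 := mul_le_mul_of_nonneg_left (Wc_le_one n) hCb0
      _ = Cb := mul_one _
  refine ⟨hSa, hSb, ?_⟩
  intro A B n
  have hA_def : ∀ m, A m = lam ^ (2*m+1) * ∑' r, a m r * lam ^ r := fun m => rfl
  have hB_def : ∀ m, B m = lam ^ (2*m) * ∑' r, b m r * lam ^ r := fun m => rfl
  have hlam2 : lam^2 < 1 := by nlinarith
  have hlam2' : (0:ℝ) ≤ lam^2 := sq_nonneg lam
  constructor
  · -- B-identity
    set f : ℕ × ℕ → ℝ :=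
      fun q => (2/π) * (a q.1 q.2 * lam ^ (q.2 + 2*q.1 + 1)) / ((n:ℝ) + q.1 + 1/2) with hfdef
    set Gf : ℕ × ℕ → ℝ :=
      fun q => if 2*q.2 + 1 ≤ q.1 then
        (2/π) * (a q.2 (q.1 - 1 - 2*q.2) * lam ^ q.1) / ((n:ℝ) + q.2 + 1/2) else 0 with hGdef
    set g : ℕ × ℕ → ℕ × ℕ := fun q => (q.2 + 2*q.1 + 1, q.1) with hgdef
    have hf_row : ∀ k : ℕ, (fun r => f (k, r))
        = fun r => ((2/π) * lam ^ (2*k+1) / ((n:ℝ) + k + 1/2)) * (a k r * lam ^ r) := by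
      intro k; funext r
      simp only [hfdef]
      rw [show r + 2*k + 1 = (2*k+1) + r by omega, pow_add]
      ring
    have hf_rowsum : ∀ k, Summable fun r => f (k, r) := by
      intro k; rw [hf_row k]; exact (hSa k).mul_left _
    have hck_nonneg : ∀ k : ℕ, (0:ℝ) ≤ (2/π) * lam ^ (2*k+1) / ((n:ℝ) + k + 1/2) := by
      intro k; positivity
    have hf_abs_row : ∀ k : ℕ, (fun r => |f (k, r)|)
        = fun r => ((2/π) * lam ^ (2*k+1) / ((n:ℝ) + k + 1/2)) * (|a k r| * lam ^ r) := by
      intro k; funext r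
      rw [congrFun (hf_row k) r, abs_mul, abs_of_nonneg (hck_nonneg k), abs_mul,
        abs_of_pos (pow_pos hlam0 r)]
    have hf_abs_rowsum : ∀ k : ℕ, ∑' r, |f (k, r)| ≤ ((4/π) * (Ca * lam)) * (lam^2)^k := by
      intro k
      rw [hf_abs_row k, tsum_mul_left]
      have h1 : ∑' r, |a k r| * lam ^ r ≤ Ca := by
        calc ∑' r, |a k r| * lam ^ r ≤ Ca * Wc k := htsum_a_abs k
          _ ≤ Ca * 1 := mul_le_mul_of_nonneg_left (Wc_le_one k) hCa0
          _ = Ca := mul_one _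
      have h2 : (2/π) * lam ^ (2*k+1) / ((n:ℝ) + k + 1/2) ≤ (4/π) * lam * (lam^2)^k := by
        have hp : lam ^ (2*k+1) = lam * (lam^2)^k := by
          rw [← pow_mul, ← pow_succ']
        rw [hp, div_le_iff₀ (hden n k)]
        have h3 : (1:ℝ) ≤ (n:ℝ) + k + 1/2 * 2 := by
          have := hden n k
          have h4 : (0:ℝ) ≤ (n:ℝ) + (k:ℝ) := by positivity
          linarith
        have hnn : (0:ℝ) ≤ (2/π) * (lam * (lam^2)^k) := by positivity
        calc (2/π) * (lam * (lam^2)^k) = (2/π) * (lam * (lam^2)^k) * 1 := by ring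
          _ ≤ (2/π) * (lam * (lam^2)^k) * (2 * ((n:ℝ) + k + 1/2)) := by
              apply mul_le_mul_of_nonneg_left _ hnn
              have h4 : (0:ℝ) ≤ (n:ℝ) + (k:ℝ) := by positivity
              linarith
          _ = (4/π) * lam * (lam^2)^k * ((n:ℝ) + k + 1/2) := by ring
      calc ((2/π) * lam ^ (2*k+1) / ((n:ℝ) + k + 1/2)) * ∑' r, |a k r| * lam ^ r
          ≤ ((2/π) * lam ^ (2*k+1) / ((n:ℝ) + k + 1/2)) * Ca :=
            mul_le_mul_of_nonneg_left h1 (hck_nonneg k)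
        _ ≤ ((4/π) * lam * (lam^2)^k) * Ca := by
            apply mul_le_mul_of_nonneg_right h2 hCa0
        _ = ((4/π) * (Ca * lam)) * (lam^2)^k := by ring
    have hf_abs : Summable fun q => |f q| := by
      apply (summable_prod_of_nonneg (fun q => abs_nonneg (f q))).mpr
      constructor
      · intro k
        exact (hf_rowsum k).abs
      · apply Summable.of_nonneg_of_le (fun k => tsum_nonneg (fun r => abs_nonneg _))
          hf_abs_rowsum
        exact (summable_geometric_of_lt_one hlam2' hlam2).mul_left _
    have hf_sum : Summable f := hf_abs.of_abs
    have hg_inj : Function.Injective g := by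
      intro p q h
      obtain ⟨p1, p2⟩ := p
      obtain ⟨q1, q2⟩ := q
      simp only [hgdef, Prod.mk.injEq] at h ⊢
      omega
    have hGf_comp : ∀ q : ℕ × ℕ, Gf (g q) = f q := by
      intro q
      obtain ⟨k, r⟩ := q
      simp only [hgdef, hGdef, hfdef]
      have hidx : r + 2*k + 1 - 1 - 2*k = r := by omega
      rw [if_pos (by omega : 2*k + 1 ≤ r + 2*k + 1), hidx]
    have hGf_supp : ∀ x ∉ Set.range g, Gf x = 0 := by
      intro x hx
      obtain ⟨x1, x2⟩ := x
      by_contra hne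
      apply hx
      have hcond : 2*x2 + 1 ≤ x1 := by
        by_contra hc
        exact hne (if_neg hc)
      refine ⟨(x2, x1 - 1 - 2*x2), ?_⟩
      simp only [hgdef, Prod.mk.injEq]
      exact ⟨by omega, trivial⟩
    have hGsum : Summable Gf := by
      apply (hg_inj.summable_iff hGf_supp).mp
      have : Gf ∘ g = f := funext hGf_comp
      rw [this]
      exact hf_sum
    have hGrows : ∀ m : ℕ, Summable fun k => Gf (m, k) := by
      intro m
      apply summable_of_ne_finset_zero (s := range (m+1))
      intro k hk
      rw [Finset.mem_range] at hk
      exact if_neg (by omega)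
    have row_eq : ∀ m : ℕ, (∑' k, Gf (m, k)) = b n m * lam ^ m := by
      intro m
      rcases Nat.eq_zero_or_pos m with hm0 | hm1
      · subst hm0
        have hz : ∀ k : ℕ, Gf (0, k) = 0 := fun k => if_neg (by omega)
        rw [tsum_congr hz, tsum_zero, hb0 n]
        ring
      · have hj : (m - 2*((m-1)/2) = 1 ∨ m - 2*((m-1)/2) = 2)
            ∧ m = (m - 2*((m-1)/2)) + 2*((m-1)/2) := by omega
        set p := (m-1)/2 with hpdef
        have hval := hbrec n p (m - 2*p) hj.1
        rw [← hj.2] at hval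
        have hsum0 : ∀ k ∉ range (p+1), Gf (m, k) = 0 := by
          intro k hk
          rw [Finset.mem_range] at hk
          apply if_neg
          omega
        rw [tsum_eq_sum hsum0]
        calc ∑ k ∈ range (p+1), Gf (m, k)
            = ∑ k ∈ range (p+1),
                (2/π) * (a k (m - 2*k - 1) * lam ^ m) / ((n:ℝ) + k + 1/2) := by
              apply Finset.sum_congr rfl
              intro k hk
              rw [Finset.mem_range] at hk
              simp only [hGdef]
              rw [if_pos (by omega : 2*k + 1 ≤ m)]
              have : m - 1 - 2*k = m - 2*k - 1 := by omega
              rw [this]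
          _ = ((2/π) * ∑ k ∈ range (p+1), a k (m - 2*k - 1) / ((n:ℝ) + k + 1/2)) * lam ^ m := by
              rw [Finset.mul_sum, Finset.sum_mul]
              apply Finset.sum_congr rfl
              intro k _
              ring
          _ = b n m * lam ^ m := by rw [← hval]
    have e1 : ∑' q, Gf q = ∑' m, ∑' k, Gf (m, k) := Summable.tsum_prod' hGsum hGrows
    have e3 : ∑' q, f q = ∑' q, Gf q := by
      have h1 : ∑' q, Gf (g q) = ∑' q, Gf q :=
        hg_inj.tsum_eq (Function.support_subset_iff'.mpr hGf_supp)
      rw [← h1]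
      exact tsum_congr (fun q => (hGf_comp q).symm)
    have key1 : ∑' m, b n m * lam ^ m = ∑' q, f q := by
      rw [e3, e1]
      exact (tsum_congr row_eq).symm
    have key2 : ∑' q, f q
        = (2/π) * ∑' k, (lam ^ (2*k+1) * ∑' r, a k r * lam ^ r) / ((n:ℝ) + k + 1/2) := by
      rw [Summable.tsum_prod' hf_sum hf_rowsum]
      have h1 : ∀ k : ℕ, (∑' r, f (k, r))
          = (2/π) * ((lam ^ (2*k+1) * ∑' r, a k r * lam ^ r) / ((n:ℝ) + k + 1/2)) := by
        intro k
        rw [tsum_congr (fun r => congrFun (hf_row k) r), tsum_mul_left]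
        ring
      rw [tsum_congr h1, tsum_mul_left]
    have hAterm : ∑' m, A m / ((n:ℝ) + m + 1/2)
        = ∑' m, (lam ^ (2*m+1) * ∑' r, a m r * lam ^ r) / ((n:ℝ) + m + 1/2) := by
      apply tsum_congr
      intro m
      rw [hA_def m]
    rw [hB_def n, key1, key2, hAterm]
    ring
  · -- A-identity
    set f : ℕ × ℕ → ℝ :=
      fun q => (1/(2*π)) * (b q.1 q.2 * lam ^ (q.2 + 2*q.1)) / ((n:ℝ) + q.1 + 1/2) with hfdef
    set Gf : ℕ × ℕ → ℝ :=
      fun q => if 2*q.2 ≤ q.1 then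
        (1/(2*π)) * (b q.2 (q.1 - 2*q.2) * lam ^ q.1) / ((n:ℝ) + q.2 + 1/2) else 0 with hGdef
    set g : ℕ × ℕ → ℕ × ℕ := fun q => (q.2 + 2*q.1, q.1) with hgdef
    have hf_row : ∀ k : ℕ, (fun r => f (k, r))
        = fun r => ((1/(2*π)) * lam ^ (2*k) / ((n:ℝ) + k + 1/2)) * (b k r * lam ^ r) := by
      intro k; funext r
      simp only [hfdef]
      rw [show r + 2*k = (2*k) + r by omega, pow_add]
      ring
    have hf_rowsum : ∀ k, Summable fun r => f (k, r) := by
      intro k; rw [hf_row k]; exact (hSb k).mul_left _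
    have hck_nonneg : ∀ k : ℕ, (0:ℝ) ≤ (1/(2*π)) * lam ^ (2*k) / ((n:ℝ) + k + 1/2) := by
      intro k; positivity
    have hf_abs_row : ∀ k : ℕ, (fun r => |f (k, r)|)
        = fun r => ((1/(2*π)) * lam ^ (2*k) / ((n:ℝ) + k + 1/2)) * (|b k r| * lam ^ r) := by
      intro k; funext r
      rw [congrFun (hf_row k) r, abs_mul, abs_of_nonneg (hck_nonneg k), abs_mul,
        abs_of_pos (pow_pos hlam0 r)]
    have hf_abs_rowsum : ∀ k : ℕ, ∑' r, |f (k, r)| ≤ ((1/π) * Cb) * (lam^2)^k := by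
      intro k
      rw [hf_abs_row k, tsum_mul_left]
      have h1 : ∑' r, |b k r| * lam ^ r ≤ Cb := by
        calc ∑' r, |b k r| * lam ^ r ≤ Cb * Wc k := htsum_b_abs k
          _ ≤ Cb * 1 := mul_le_mul_of_nonneg_left (Wc_le_one k) hCb0
          _ = Cb := mul_one _
      have h2 : (1/(2*π)) * lam ^ (2*k) / ((n:ℝ) + k + 1/2) ≤ (1/π) * (lam^2)^k := by
        have hp : lam ^ (2*k) = (lam^2)^k := by rw [← pow_mul]
        rw [hp, div_le_iff₀ (hden n k)]
        have hnn : (0:ℝ) ≤ (1/(2*π)) * (lam^2)^k := by positivity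
        calc (1/(2*π)) * (lam^2)^k = (1/(2*π)) * (lam^2)^k * 1 := by ring
          _ ≤ (1/(2*π)) * (lam^2)^k * (2 * ((n:ℝ) + k + 1/2)) := by
              apply mul_le_mul_of_nonneg_left _ hnn
              have h4 : (0:ℝ) ≤ (n:ℝ) + (k:ℝ) := by positivity
              linarith
          _ = (1/π) * (lam^2)^k * ((n:ℝ) + k + 1/2) := by ring
      calc ((1/(2*π)) * lam ^ (2*k) / ((n:ℝ) + k + 1/2)) * ∑' r, |b k r| * lam ^ r
          ≤ ((1/(2*π)) * lam ^ (2*k) / ((n:ℝ) + k + 1/2)) * Cb :=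
            mul_le_mul_of_nonneg_left h1 (hck_nonneg k)
        _ ≤ ((1/π) * (lam^2)^k) * Cb := mul_le_mul_of_nonneg_right h2 hCb0
        _ = ((1/π) * Cb) * (lam^2)^k := by ring
    have hf_abs : Summable fun q => |f q| := by
      apply (summable_prod_of_nonneg (fun q => abs_nonneg (f q))).mpr
      constructor
      · intro k
        exact (hf_rowsum k).abs
      · apply Summable.of_nonneg_of_le (fun k => tsum_nonneg (fun r => abs_nonneg _))
          hf_abs_rowsum
        exact (summable_geometric_of_lt_one hlam2' hlam2).mul_left _
    have hf_sum : Summable f := hf_abs.of_abs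
    have hg_inj : Function.Injective g := by
      intro p q h
      obtain ⟨p1, p2⟩ := p
      obtain ⟨q1, q2⟩ := q
      simp only [hgdef, Prod.mk.injEq] at h ⊢
      omega
    have hGf_comp : ∀ q : ℕ × ℕ, Gf (g q) = f q := by
      intro q
      obtain ⟨k, r⟩ := q
      simp only [hgdef, hGdef, hfdef]
      have hidx : r + 2*k - 2*k = r := by omega
      rw [if_pos (by omega : 2*k ≤ r + 2*k), hidx]
    have hGf_supp : ∀ x ∉ Set.range g, Gf x = 0 := by
      intro x hx
      obtain ⟨x1, x2⟩ := x
      by_contra hne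
      apply hx
      have hcond : 2*x2 ≤ x1 := by
        by_contra hc
        exact hne (if_neg hc)
      refine ⟨(x2, x1 - 2*x2), ?_⟩
      simp only [hgdef, Prod.mk.injEq]
      exact ⟨by omega, trivial⟩
    have hGsum : Summable Gf := by
      apply (hg_inj.summable_iff hGf_supp).mp
      have : Gf ∘ g = f := funext hGf_comp
      rw [this]
      exact hf_sum
    have hGrows : ∀ m : ℕ, Summable fun k => Gf (m, k) := by
      intro m
      apply summable_of_ne_finset_zero (s := range (m+1))
      intro k hk
      rw [Finset.mem_range] at hk
      exact if_neg (by omega)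
    have row_eq : ∀ m : ℕ, (∑' k, Gf (m, k)) = if m = 0 then 0 else a n m * lam ^ m := by
      intro m
      rcases Nat.eq_zero_or_pos m with hm0 | hm1
      · subst hm0
        have hz : ∀ k : ℕ, Gf (0, k) = 0 := by
          intro k
          cases k with
          | zero =>
              simp only [hGdef]
              rw [if_pos (by omega : 2*0 ≤ 0)]
              simp [hb0 0]
          | succ k' => exact if_neg (by omega)
        rw [tsum_congr hz, tsum_zero]
        simp
      · have hj : (m - 2*((m-1)/2) = 1 ∨ m - 2*((m-1)/2) = 2)
            ∧ m = (m - 2*((m-1)/2)) + 2*((m-1)/2) := by omega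
        set p := (m-1)/2 with hpdef
        have hval := harec n p (m - 2*p) hj.1
        rw [← hj.2] at hval
        have hsum0 : ∀ k ∉ range (p+2), Gf (m, k) = 0 := by
          intro k hk
          rw [Finset.mem_range] at hk
          apply if_neg
          omega
        rw [tsum_eq_sum hsum0, Finset.sum_range_succ]
        have hlast : Gf (m, p+1) = 0 := by
          simp only [hGdef]
          rcases hj.1 with hj1 | hj1
          · exact if_neg (by omega)
          · rw [if_pos (by omega : 2*(p+1) ≤ m)]
            have hz : m - 2*(p+1) = 0 := by omega
            rw [hz, hb0 (p+1)]
            simp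
        rw [hlast, add_zero]
        rw [if_neg (by omega : ¬ m = 0)]
        calc ∑ k ∈ range (p+1), Gf (m, k)
            = ∑ k ∈ range (p+1),
                (1/(2*π)) * (b k (m - 2*k) * lam ^ m) / ((n:ℝ) + k + 1/2) := by
              apply Finset.sum_congr rfl
              intro k hk
              rw [Finset.mem_range] at hk
              simp only [hGdef]
              rw [if_pos (by omega : 2*k ≤ m)]
          _ = ((1/(2*π)) * ∑ k ∈ range (p+1), b k (m - 2*k) / ((n:ℝ) + k + 1/2)) * lam ^ m := by
              rw [Finset.mul_sum, Finset.sum_mul]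
              apply Finset.sum_congr rfl
              intro k _
              ring
          _ = a n m * lam ^ m := by rw [← hval]
    have e1 : ∑' q, Gf q = ∑' m, ∑' k, Gf (m, k) := Summable.tsum_prod' hGsum hGrows
    have e3 : ∑' q, f q = ∑' q, Gf q := by
      have h1 : ∑' q, Gf (g q) = ∑' q, Gf q :=
        hg_inj.tsum_eq (Function.support_subset_iff'.mpr hGf_supp)
      rw [← h1]
      exact tsum_congr (fun q => (hGf_comp q).symm)
    have hrow_summ : Summable (fun m => if m = 0 then 0 else a n m * lam ^ m) := by
      apply Summable.of_norm_bounded (hSa_abs n)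
      intro m
      rcases Nat.eq_zero_or_pos m with hm0 | hm1
      · subst hm0
        rw [if_pos rfl, norm_zero]
        exact mul_nonneg (abs_nonneg _) (pow_pos hlam0 0).le
      · rw [if_neg (by omega : ¬ m = 0), Real.norm_eq_abs, abs_mul,
          abs_of_pos (pow_pos hlam0 m)]
    have key1 : ∑' m, a n m * lam ^ m = a n 0 + ∑' q, f q := by
      have t1 := Summable.tsum_eq_zero_add (hSa n)
      have t2 := Summable.tsum_eq_zero_add hrow_summ
      have t3 : (fun m : ℕ => if m + 1 = 0 then (0:ℝ) else a n (m+1) * lam ^ (m+1))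
          = fun m : ℕ => a n (m+1) * lam ^ (m+1) := by
        funext m
        rw [if_neg (by omega : ¬ m + 1 = 0)]
      rw [t3] at t2
      simp only [if_pos rfl, zero_add] at t2
      rw [e3, e1, tsum_congr row_eq, t2, t1]
      simp
    have key2 : ∑' q, f q
        = (1/(2*π)) * ∑' k, (lam ^ (2*k) * ∑' r, b k r * lam ^ r) / ((n:ℝ) + k + 1/2) := by
      rw [Summable.tsum_prod' hf_sum hf_rowsum]
      have h1 : ∀ k : ℕ, (∑' r, f (k, r))
          = (1/(2*π)) * ((lam ^ (2*k) * ∑' r, b k r * lam ^ r) / ((n:ℝ) + k + 1/2)) := by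
        intro k
        rw [tsum_congr (fun r => congrFun (hf_row k) r), tsum_mul_left]
        ring
      rw [tsum_congr h1, tsum_mul_left]
    have hBterm : ∑' m, B m / ((n:ℝ) + m + 1/2)
        = ∑' m, (lam ^ (2*m) * ∑' r, b m r * lam ^ r) / ((n:ℝ) + m + 1/2) := by
      apply tsum_congr
      intro m
      rw [hB_def m]
    rw [hA_def n, key1, key2, hBterm, ha0 n]
    have hn1 : ((n:ℝ) + 1/2) ≠ 0 := by positivity
    have hn2 : (2*(n:ℝ) + 1) ≠ 0 := by positivity
    field_simp
    ring
end

section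
/- Let λ ∈ (0,1) and suppose (A_m⁺)_{m≥0}, (B_m⁻)_{m≥0} are real sequences with |A_m⁺| + |B_m⁻| ≤ C λ^{2m} satisfying the system B_n⁻ = (2λ^{2n}/π) Σ_{m≥0} A_m⁺/(n+m+1/2) and A_n⁺ = (λ^{2n+1}/(2π)) Σ_{m≥0} B_m⁻/(n+m+1/2) + λ^{2n+1} ω(2n+1) with ω(s) = −2δ*/(π s) and δ* = 0. Then A_n⁺ = 0 and B_n⁻ = 0 for all n (the homogeneous system has only the trivial solution in this class). -/
/-!
The weights `w n = centralBinomRatio n = C(2n, n) / 4 ^ n`, the Taylor coefficients of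
`(1 - x) ^ (-1/2)`, satisfy `∑ₘ w m / (n + m + 1/2) ≤ π w n`: they are a Schur test function
for the Hilbert-type kernel `1 / (n + m + 1/2)`, whose norm is `π`. Hence if `|A m| ≤ c w m` for
all `m`, the first equation gives `|B m| ≤ 2 c w m` and the second
`|A n| ≤ λ ^ (2n+1) c w n ≤ λ c w n`. The geometric decay of `A` provides some `c`, so iterating
gives `|A n| ≤ λ ^ k c w n → 0`, and then `B = 0` as well.
-/

open Real Finset

noncomputable def centralBinomRatio (n : ℕ) : ℝ := n.centralBinom / 4 ^ n

lemma centralBinomRatio_pos (n : ℕ) : 0 < centralBinomRatio n := by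
  unfold centralBinomRatio
  have := n.centralBinom_pos
  positivity

lemma centralBinomRatio_zero : centralBinomRatio 0 = 1 := by simp [centralBinomRatio]

lemma centralBinomRatio_succ (n : ℕ) :
    centralBinomRatio (n + 1) = centralBinomRatio n * (2 * n + 1) / (2 * n + 2) := by
  have h : ((n + 1 : ℕ) : ℝ) * (n + 1).centralBinom = 2 * (2 * n + 1) * n.centralBinom := by
    exact_mod_cast Nat.succ_mul_centralBinom_succ n
  push_cast at h
  simp only [centralBinomRatio]
  field_simp
  rw [pow_succ]
  linear_combination 2 * (4 : ℝ) ^ n * h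

lemma one_div_le_centralBinomRatio (n : ℕ) : 1 / (2 * n + 1) ≤ centralBinomRatio n := by
  have h : ((4 ^ n : ℕ) : ℝ) ≤ ((2 * n + 1) * n.centralBinom : ℕ) := by
    exact_mod_cast n.centralBinom_eq_two_mul_choose ▸
      Nat.four_pow_le_two_mul_add_one_mul_central_binom n
  push_cast at h
  unfold centralBinomRatio
  rw [div_le_div_iff₀ (by positivity) (by positivity)]
  linarith

lemma Ring.choose_half_add_natCast_sub_one (n : ℕ) :
    Ring.choose ((1 / 2 : ℝ) + n - 1) n = centralBinomRatio n := by
  induction n with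
  | zero => simp [centralBinomRatio_zero]
  | succ n ih =>
    have h := Ring.choose_smul_choose ((1 / 2 : ℝ) + (n + 1 : ℕ) - 1) (n := n + 1) (k := 1)
      (by omega)
    have e : (1 / 2 : ℝ) + ((n + 1 : ℕ) : ℝ) - 1 - ((1 : ℕ) : ℝ) = 1 / 2 + n - 1 := by
      push_cast; ring
    rw [e, Nat.add_sub_cancel, ih, Nat.choose_one_right, Ring.choose_one_right,
      nsmul_eq_mul] at h
    rw [centralBinomRatio_succ]
    generalize Ring.choose ((1 / 2 : ℝ) + (n + 1 : ℕ) - 1) (n + 1) = c at h ⊢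
    push_cast at h
    field_simp
    linear_combination 2 * h

lemma sum_range_centralBinomRatio_mul_pow_mul_sqrt_le {x : ℝ} (hx0 : 0 ≤ x) (hx1 : x ≤ 1)
    (N : ℕ) : (∑ m ∈ range N, centralBinomRatio m * x ^ m) * √(1 - x) ≤ 1 := by
  rcases hx1.eq_or_lt with rfl | hx1
  · simp
  have hx : x ∈ Metric.eball (0 : ℝ) 1 := by
    rwa [Metric.mem_eball, edist_zero_right, enorm_eq_nnnorm, ENNReal.coe_lt_one_iff,
      ← NNReal.coe_lt_one, coe_nnnorm, norm_of_nonneg hx0]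
  have h := (one_div_one_sub_rpow_hasFPowerSeriesOnBall_zero (1 / 2)).hasSum hx
  simp only [FormalMultilinearSeries.ofScalars_apply_eq, Ring.choose_half_add_natCast_sub_one,
    smul_eq_mul, zero_add, ← sqrt_eq_rpow] at h
  rw [← le_div_iff₀ (sqrt_pos.2 (by linarith))]
  exact sum_le_hasSum _ (fun m _ => mul_nonneg (centralBinomRatio_pos m).le (pow_nonneg hx0 m)) h

lemma integral_sin_pow_mul_cos (m : ℕ) :
    ∫ θ in -(π / 2)..π / 2, sin θ ^ (2 * m) * cos θ = 1 / (m + 1 / 2) := by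
  have h := integral_sin_pow_mul_cos_pow_odd (a := -(π / 2)) (b := π / 2) (2 * m) 0
  simp only [mul_zero, zero_add, pow_one, pow_zero, mul_one, sin_neg, sin_pi_div_two] at h
  rw [h, integral_pow]
  simp [Odd.neg_pow (odd_two_mul_add_one m)]
  field_simp
  ring

/-- The case `n = 0` of the Schur test (the arcsine series at `1`): substituting `x = sin θ`,
the bound `∑ w m x ^ (2m) ≤ 1 / √(1 - x²)` becomes `∑ w m sin θ ^ (2m) cos θ ≤ 1`. -/
lemma sum_range_centralBinomRatio_div_le_pi (N : ℕ) :
    ∑ m ∈ range N, centralBinomRatio m / (m + 1 / 2) ≤ π := by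
  have hint : ∀ m ∈ range N, IntervalIntegrable
      (fun θ => centralBinomRatio m * (sin θ ^ (2 * m) * cos θ)) MeasureTheory.volume
      (-(π / 2)) (π / 2) :=
    fun m _ => (by fun_prop : Continuous _).intervalIntegrable _ _
  calc ∑ m ∈ range N, centralBinomRatio m / (m + 1 / 2)
      = ∫ θ in -(π / 2)..π / 2,
          (∑ m ∈ range N, centralBinomRatio m * sin θ ^ (2 * m)) * cos θ := by
        simp_rw [sum_mul, mul_assoc]
        rw [intervalIntegral.integral_finsetSum hint]
        refine sum_congr rfl fun m _ => ?_
        rw [intervalIntegral.integral_const_mul, integral_sin_pow_mul_cos, div_eq_mul_one_div]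
    _ ≤ ∫ θ in -(π / 2)..π / 2, (1 : ℝ) := by
        refine intervalIntegral.integral_mono_on (by linarith [pi_pos])
          ((by fun_prop : Continuous _).intervalIntegrable _ _) intervalIntegrable_const ?_
        intro θ hθ
        have h := sum_range_centralBinomRatio_mul_pow_mul_sqrt_le (sq_nonneg (sin θ))
          (sin_sq_le_one θ) N
        simpa [← pow_mul, ← cos_eq_sqrt_one_sub_sin_sq hθ.1 hθ.2] using h
    _ = π := by simp

lemma sum_range_centralBinomRatio_div_add_one (N : ℕ) :
    ∑ k ∈ range N, centralBinomRatio k / (k + 1) = 2 * (1 - centralBinomRatio N) := by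
  induction N with
  | zero => simp [centralBinomRatio_zero]
  | succ N ih =>
    rw [sum_range_succ, ih, centralBinomRatio_succ]
    field_simp
    ring

lemma summable_centralBinomRatio_div_add_one :
    Summable fun k : ℕ => centralBinomRatio k / (k + 1) :=
  summable_of_sum_range_le (c := 2)
    (fun k => div_nonneg (centralBinomRatio_pos k).le (by positivity))
    fun N => by rw [sum_range_centralBinomRatio_div_add_one]; linarith [centralBinomRatio_pos N]

lemma tsum_centralBinomRatio_div_add_one_le : ∑' k : ℕ, centralBinomRatio k / (k + 1) ≤ 2 :=
  Real.tsum_le_of_sum_range_le (fun k => div_nonneg (centralBinomRatio_pos k).le (by positivity))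
    fun N => by rw [sum_range_centralBinomRatio_div_add_one]; linarith [centralBinomRatio_pos N]

lemma summable_centralBinomRatio_div {x : ℝ} (hx : 0 ≤ x) :
    Summable fun m : ℕ => centralBinomRatio m / (x + m + 1 / 2) :=
  (summable_of_sum_range_le (fun m => div_nonneg (centralBinomRatio_pos m).le (by positivity))
    sum_range_centralBinomRatio_div_le_pi).of_nonneg_of_le
    (fun m => div_nonneg (centralBinomRatio_pos m).le (by positivity))
    fun m => div_le_div_of_nonneg_left (centralBinomRatio_pos m).le (by positivity) (by linarith)

lemma centralBinomRatio_succ_div {x : ℝ} (hx : 0 ≤ x) (k : ℕ) :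
    centralBinomRatio (k + 1) / (x + (k + 1 : ℕ) + 1 / 2)
      = ((2 * x + 2) * (centralBinomRatio k / (x + 1 + k + 1 / 2))
          - centralBinomRatio k / (k + 1)) / (2 * x + 1) := by
  rw [centralBinomRatio_succ]
  push_cast
  field_simp
  ring

/-- Shifting the summation index gives, with `G x = ∑ w m / (x + m + 1/2)`, the identity
`(2x + 1) G x = (2x + 2) G (x + 1) + 2 - ∑ w k / (k + 1)`. -/
lemma two_mul_add_two_mul_tsum_centralBinomRatio_div_le {x : ℝ} (hx : 0 ≤ x) :
    (2 * x + 2) * ∑' m : ℕ, centralBinomRatio m / (x + 1 + m + 1 / 2)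
      ≤ (2 * x + 1) * ∑' m : ℕ, centralBinomRatio m / (x + m + 1 / 2) := by
  have hshift : ∑' m : ℕ, centralBinomRatio m / (x + m + 1 / 2) = 2 / (2 * x + 1)
      + ((2 * x + 2) * ∑' m : ℕ, centralBinomRatio m / (x + 1 + m + 1 / 2)
          - ∑' k : ℕ, centralBinomRatio k / (k + 1)) / (2 * x + 1) := by
    rw [(summable_centralBinomRatio_div hx).tsum_eq_zero_add]
    simp_rw [centralBinomRatio_succ_div hx]
    rw [tsum_div_const,
      Summable.tsum_sub ((summable_centralBinomRatio_div (by linarith)).mul_left _)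
        summable_centralBinomRatio_div_add_one,
      tsum_mul_left, centralBinomRatio_zero]
    congr 1
    field_simp
    ring
  rw [hshift, mul_add, mul_div_cancel₀ _ (by positivity), mul_div_cancel₀ _ (by positivity)]
  linarith [tsum_centralBinomRatio_div_add_one_le]

lemma tsum_centralBinomRatio_div_le (n : ℕ) :
    ∑' m : ℕ, centralBinomRatio m / (n + m + 1 / 2) ≤ π * centralBinomRatio n := by
  induction n with
  | zero =>
    simpa [centralBinomRatio_zero] using Real.tsum_le_of_sum_range_le
      (fun m => div_nonneg (centralBinomRatio_pos m).le (by positivity))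
      sum_range_centralBinomRatio_div_le_pi
  | succ n ih =>
    have hw : (2 * (n : ℝ) + 2) * centralBinomRatio (n + 1)
        = (2 * n + 1) * centralBinomRatio n := by
      rw [centralBinomRatio_succ]; field_simp
    push_cast
    refine le_of_mul_le_mul_left ?_ (by positivity : (0 : ℝ) < 2 * n + 2)
    calc (2 * (n : ℝ) + 2) * ∑' m : ℕ, centralBinomRatio m / (n + 1 + m + 1 / 2)
        ≤ (2 * n + 1) * (π * centralBinomRatio n) :=
          (two_mul_add_two_mul_tsum_centralBinomRatio_div_le n.cast_nonneg).trans
            (mul_le_mul_of_nonneg_left ih (by positivity))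
      _ = (2 * n + 2) * (π * centralBinomRatio (n + 1)) := by rw [mul_left_comm, ← hw]; ring

section SchurTest

variable {f : ℕ → ℝ} {c : ℝ}

lemma nonneg_of_forall_abs_le_mul_centralBinomRatio
    (hf : ∀ m, |f m| ≤ c * centralBinomRatio m) : 0 ≤ c := by
  simpa [centralBinomRatio_zero] using (abs_nonneg _).trans (hf 0)

lemma abs_tsum_div_le (hf : ∀ m, |f m| ≤ c * centralBinomRatio m) (n : ℕ) :
    |∑' m : ℕ, f m / (n + m + 1 / 2)| ≤ π * c * centralBinomRatio n := by
  calc |∑' m : ℕ, f m / (n + m + 1 / 2)|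
      ≤ ∑' m : ℕ, c * (centralBinomRatio m / (n + m + 1 / 2)) := by
        rw [← norm_eq_abs]
        refine tsum_of_norm_bounded
          ((summable_centralBinomRatio_div n.cast_nonneg).mul_left c).hasSum fun m => ?_
        rw [norm_div, norm_of_nonneg (by positivity : (0 : ℝ) ≤ n + m + 1 / 2),
          ← mul_div_assoc]
        exact div_le_div_of_nonneg_right (hf m) (by positivity)
    _ = c * ∑' m : ℕ, centralBinomRatio m / (n + m + 1 / 2) := tsum_mul_left
    _ ≤ c * (π * centralBinomRatio n) :=
        mul_le_mul_of_nonneg_left (tsum_centralBinomRatio_div_le n)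
          (nonneg_of_forall_abs_le_mul_centralBinomRatio hf)
    _ = π * c * centralBinomRatio n := by ring

lemma abs_mul_tsum_div_le {a κ : ℝ} (hf : ∀ m, |f m| ≤ c * centralBinomRatio m)
    (ha : |a| ≤ κ / π) (n : ℕ) :
    |a * ∑' m : ℕ, f m / (n + m + 1 / 2)| ≤ κ * c * centralBinomRatio n := by
  calc |a * ∑' m : ℕ, f m / (n + m + 1 / 2)| ≤ κ / π * (π * c * centralBinomRatio n) := by
        rw [abs_mul]
        exact mul_le_mul ha (abs_tsum_div_le hf n) (abs_nonneg _) ((abs_nonneg a).trans ha)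
    _ = κ * c * centralBinomRatio n := by field_simp

end SchurTest

lemma exists_forall_abs_le_mul_centralBinomRatio {f : ℕ → ℝ} {C r : ℝ} (hr0 : 0 ≤ r)
    (hr1 : r < 1) (hf : ∀ m, |f m| ≤ C * r ^ m) :
    ∃ c, ∀ m, |f m| ≤ c * centralBinomRatio m := by
  have hC : 0 ≤ C := by simpa using (abs_nonneg _).trans (hf 0)
  have hlim : Filter.Tendsto (fun m : ℕ => 2 * (m * r ^ m) + r ^ m) Filter.atTop (nhds 0) := by
    simpa using ((tendsto_self_mul_const_pow_of_lt_one hr0 hr1).const_mul 2).add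
      (tendsto_pow_atTop_nhds_zero_of_lt_one hr0 hr1)
  obtain ⟨K, hK⟩ := hlim.bddAbove_range
  refine ⟨C * K, fun m => ?_⟩
  have hKm : (2 * m + 1) * r ^ m ≤ K := by
    have := hK ⟨m, rfl⟩
    linarith
  calc |f m| ≤ C * r ^ m := hf m
    _ = C * ((2 * m + 1) * r ^ m) * (1 / (2 * m + 1)) := by field_simp
    _ ≤ C * K * centralBinomRatio m := by
        gcongr
        · exact mul_nonneg hC ((by positivity : (0 : ℝ) ≤ (2 * m + 1) * r ^ m).trans hKm)
        · exact one_div_le_centralBinomRatio m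

lemma abs_le_lam_mul_of_abs_le_mul_centralBinomRatio {lam c : ℝ} {A B : ℕ → ℝ}
    (hlam0 : 0 ≤ lam) (hlam1 : lam ≤ 1)
    (hB : ∀ n : ℕ, B n = (2 * lam ^ (2 * n) / π) * ∑' m : ℕ, A m / (n + m + 1 / 2))
    (hA : ∀ n : ℕ, A n = (lam ^ (2 * n + 1) / (2 * π)) * ∑' m : ℕ, B m / (n + m + 1 / 2))
    (hc : ∀ m, |A m| ≤ c * centralBinomRatio m) (n : ℕ) :
    |A n| ≤ lam * c * centralBinomRatio n := by
  have hBc : ∀ m, |B m| ≤ (2 * c) * centralBinomRatio m := fun m => by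
    rw [hB m]
    refine abs_mul_tsum_div_le hc ?_ m
    rw [abs_of_nonneg (by positivity)]
    gcongr
    linarith [pow_le_one₀ hlam0 hlam1 (n := 2 * m)]
  rw [hA n, show lam * c = lam / 2 * (2 * c) by ring]
  refine abs_mul_tsum_div_le hBc ?_ n
  rw [abs_of_nonneg (by positivity), div_div, mul_comm 2 π]
  gcongr
  exact pow_le_of_le_one hlam0 hlam1 (by omega)

theorem homogeneous_system_trivial_general (lam C : ℝ) (hlam0 : 0 < lam) (hlam1 : lam < 1)
    (A B : ℕ → ℝ)
    (hbound : ∀ m : ℕ, |A m| + |B m| ≤ C * lam ^ (2 * m))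
    (hB : ∀ n : ℕ, B n = (2 * lam ^ (2 * n) / π) * ∑' m : ℕ, A m / (n + m + 1 / 2))
    (hA : ∀ n : ℕ, A n = (lam ^ (2 * n + 1) / (2 * π)) * ∑' m : ℕ, B m / (n + m + 1 / 2)) :
    ∀ n : ℕ, A n = 0 ∧ B n = 0 := by
  obtain ⟨c, hc⟩ := exists_forall_abs_le_mul_centralBinomRatio (f := A) (C := C) (sq_nonneg lam)
    (pow_lt_one₀ hlam0.le hlam1 two_ne_zero) fun m => by
      rw [← pow_mul]
      linarith [hbound m, abs_nonneg (B m)]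
  have hiter : ∀ k n, |A n| ≤ lam ^ k * c * centralBinomRatio n := by
    intro k
    induction k with
    | zero => simpa using hc
    | succ k ih =>
      simpa [pow_succ', mul_assoc] using
        abs_le_lam_mul_of_abs_le_mul_centralBinomRatio hlam0.le hlam1.le hB hA ih
  have hA0 : ∀ n, A n = 0 := fun n => by
    have hlim := ((tendsto_pow_atTop_nhds_zero_of_lt_one hlam0.le hlam1).mul_const c).mul_const
      (centralBinomRatio n)
    rw [zero_mul, zero_mul] at hlim
    exact abs_nonpos_iff.1 (ge_of_tendsto' hlim fun k => hiter k n)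
  exact fun n => ⟨hA0 n, by simp [hB n, hA0]⟩

theorem homogeneous_system_trivial (lam C : ℝ) (hlam0 : 0 < lam) (hlam1 : lam < 1) (hC : 0 < C)
    (A B : ℕ → ℝ)
    (hbound : ∀ m : ℕ, |A m| + |B m| ≤ C * lam ^ (2 * m))
    (hB : ∀ n : ℕ, B n = (2 * lam ^ (2 * n) / π) * ∑' m : ℕ, A m / (n + m + 1 / 2))
    (hA : ∀ n : ℕ, A n = (lam ^ (2 * n + 1) / (2 * π)) * ∑' m : ℕ, B m / (n + m + 1 / 2)) :
    ∀ n : ℕ, A n = 0 ∧ B n = 0 :=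
  homogeneous_system_trivial_general lam C hlam0 hlam1 A B hbound hB hA
end
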